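/- Let p = (x,y) ∈ ℝ². If ((x − x_i)² + (y − y_i)²)/d_i(p)² < 1/(m+2) holds for every i = 1,…,n, then a·c − b² > 0, where a = −m Σ_{i=1}^n d_i(p)^{−(m+2)} (1 − (m+2)(x − x_i)²/d_i(p)²), b = m(m+2) Σ_{i=1}^n (x − x_i)(y − y_i)/d_i(p)^{m+4}, and c = −m Σ_{i=1}^n d_i(p)^{−(m+2)} (1 − (m+2)(y − y_i)²/d_i(p)²) are the entries of the Hessian matrix of f at p. -/

import Mathlib

open Real Finset

/-- Distance from `q ∈ ℝ²` (at height `h`) to the point `(xi, yi)` in the base plane. -/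
noncomputable def distPt (xi yi h : ℝ) (q : ℝ × ℝ) : ℝ :=
  Real.sqrt ((q.1 - xi) ^ 2 + (q.2 - yi) ^ 2 + h ^ 2)

/-- The objective functional `f(q, h) = ∑ i, d_i(q,h)^(-m)`. -/
noncomputable def fEnergy {N : ℕ} (X Y : Fin N → ℝ) (m h : ℝ) (q : ℝ × ℝ) : ℝ :=
  ∑ i, distPt (X i) (Y i) h q ^ (-m)

/-- First component of the gradient `F = ∇f`. -/
noncomputable def F1 {N : ℕ} (X Y : Fin N → ℝ) (m h : ℝ) (q : ℝ × ℝ) : ℝ :=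
  -m * ∑ i, (q.1 - X i) / distPt (X i) (Y i) h q ^ (m + 2)

/-- Second component of the gradient `F = ∇f`. -/
noncomputable def F2 {N : ℕ} (X Y : Fin N → ℝ) (m h : ℝ) (q : ℝ × ℝ) : ℝ :=
  -m * ∑ i, (q.2 - Y i) / distPt (X i) (Y i) h q ^ (m + 2)

/-- Entry `a` (the `∂²f/∂x²` entry) of the Hessian matrix of `f(·,h)`. -/
noncomputable def hessA {N : ℕ} (X Y : Fin N → ℝ) (m h : ℝ) (p : ℝ × ℝ) : ℝ :=
  -m * ∑ i, (1 / distPt (X i) (Y i) h p ^ (m + 2)) *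
    (1 - (m + 2) * (p.1 - X i) ^ 2 / distPt (X i) (Y i) h p ^ 2)

/-- Entry `b` (the mixed `∂²f/∂x∂y` entry) of the Hessian matrix of `f(·,h)`. -/
noncomputable def hessB {N : ℕ} (X Y : Fin N → ℝ) (m h : ℝ) (p : ℝ × ℝ) : ℝ :=
  m * (m + 2) * ∑ i, (p.1 - X i) * (p.2 - Y i) / distPt (X i) (Y i) h p ^ (m + 4)

/-- Entry `c` (the `∂²f/∂y²` entry) of the Hessian matrix of `f(·,h)`. -/
noncomputable def hessC {N : ℕ} (X Y : Fin N → ℝ) (m h : ℝ) (p : ℝ × ℝ) : ℝ :=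
  -m * ∑ i, (1 / distPt (X i) (Y i) h p ^ (m + 2)) *
    (1 - (m + 2) * (p.2 - Y i) ^ 2 / distPt (X i) (Y i) h p ^ 2)

/-!
Up to the factor `m²`, the Hessian is the sum over `i` of the `2 × 2` matrices
`d_i^{-(m+2)} (I - (m+2) w_i w_iᵀ / d_i²)` with `w_i = p - x_i`. Each has determinant
`d_i^{-2(m+2)} (1 - (m+2)|w_i|²/d_i²)`, positive by hypothesis, and positive diagonal, so each is
positive definite; a sum of positive definite matrices is positive definite. On the level of
entries this last step is the strict Cauchy–Schwarz inequality
`(∑ bᵢ)² < (∑ aᵢ)(∑ cᵢ)` whenever `bᵢ² < aᵢ cᵢ` and `aᵢ, cᵢ ≥ 0`.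
-/

theorem sq_sum_lt_sum_mul_sum_of_sq_lt_mul {ι : Type*} {s : Finset ι} (hs : s.Nonempty)
    {r f g : ι → ℝ} (hf : ∀ i ∈ s, 0 ≤ f i) (hg : ∀ i ∈ s, 0 ≤ g i)
    (hr : ∀ i ∈ s, r i ^ 2 < f i * g i) :
    (∑ i ∈ s, r i) ^ 2 < (∑ i ∈ s, f i) * ∑ i ∈ s, g i := by
  have habs_lt : ∑ i ∈ s, |r i| < ∑ i ∈ s, √(f i * g i) :=
    sum_lt_sum_of_nonempty hs fun i hi =>
      (lt_sqrt (abs_nonneg _)).2 (by rw [sq_abs]; exact hr i hi)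
  calc (∑ i ∈ s, r i) ^ 2 = |∑ i ∈ s, r i| ^ 2 := (sq_abs _).symm
    _ ≤ (∑ i ∈ s, |r i|) ^ 2 := pow_le_pow_left₀ (abs_nonneg _) (abs_sum_le_sum_abs _ _) 2
    _ < (∑ i ∈ s, √(f i * g i)) ^ 2 :=
      pow_lt_pow_left₀ habs_lt (sum_nonneg fun _ _ => abs_nonneg _) two_ne_zero
    _ ≤ (∑ i ∈ s, f i) * ∑ i ∈ s, g i :=
      sum_sq_le_sum_mul_sum_of_sq_le_mul s hf hg fun i hi =>
        (sq_sqrt (mul_nonneg (hf i hi) (hg i hi))).le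

noncomputable def hessDiagTerm (m d u : ℝ) : ℝ :=
  1 / d ^ (m + 2) * (1 - (m + 2) * u ^ 2 / d ^ 2)

noncomputable def hessOffDiagTerm (m d u v : ℝ) : ℝ :=
  (m + 2) * (u * v / d ^ (m + 4))

section HessianTerms

variable {m d u v : ℝ}

theorem hessDiagTerm_pos (hd : 0 < d) (hu : (m + 2) * u ^ 2 < d ^ 2) :
    0 < hessDiagTerm m d u := by
  have hd2 : 0 < d ^ 2 := by positivity
  refine mul_pos (one_div_pos.2 (rpow_pos_of_pos hd _)) (sub_pos.2 ?_)
  rwa [div_lt_one hd2]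

theorem hessDiagTerm_mul_sub_hessOffDiagTerm_sq (hd : 0 < d) :
    hessDiagTerm m d u * hessDiagTerm m d v - hessOffDiagTerm m d u v ^ 2 =
      (1 / d ^ (m + 2)) ^ 2 * (1 - (m + 2) * (u ^ 2 + v ^ 2) / d ^ 2) := by
  have hD : d ^ (m + 2) ≠ 0 := (rpow_pos_of_pos hd _).ne'
  have hsplit : d ^ (m + 4) = d ^ (m + 2) * d ^ 2 := by
    rw [show m + 4 = (m + 2) + 2 by ring, rpow_add hd, rpow_two]
  simp only [hessDiagTerm, hessOffDiagTerm, hsplit]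
  field_simp
  ring

theorem hessOffDiagTerm_sq_lt (hd : 0 < d) (huv : (m + 2) * (u ^ 2 + v ^ 2) < d ^ 2) :
    hessOffDiagTerm m d u v ^ 2 < hessDiagTerm m d u * hessDiagTerm m d v := by
  have hd2 : 0 < d ^ 2 := by positivity
  have hdet := hessDiagTerm_mul_sub_hessOffDiagTerm_sq (m := m) (u := u) (v := v) hd
  have : 0 < (1 / d ^ (m + 2)) ^ 2 * (1 - (m + 2) * (u ^ 2 + v ^ 2) / d ^ 2) :=
    mul_pos (pow_pos (one_div_pos.2 (rpow_pos_of_pos hd _)) 2)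
      (sub_pos.2 ((div_lt_one hd2).2 huv))
  linarith

end HessianTerms

section HessianEntries

variable {N : ℕ} (X Y : Fin N → ℝ) (m h : ℝ) (p : ℝ × ℝ)

theorem hessA_eq_sum :
    hessA X Y m h p = -m * ∑ i, hessDiagTerm m (distPt (X i) (Y i) h p) (p.1 - X i) := rfl

theorem hessC_eq_sum :
    hessC X Y m h p = -m * ∑ i, hessDiagTerm m (distPt (X i) (Y i) h p) (p.2 - Y i) := rfl

theorem hessB_eq_sum :
    hessB X Y m h p =
      m * ∑ i, hessOffDiagTerm m (distPt (X i) (Y i) h p) (p.1 - X i) (p.2 - Y i) := by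
  simp only [hessB, hessOffDiagTerm, mul_sum, mul_assoc, mul_div_assoc]

end HessianEntries

theorem distPt_pos {xi yi h : ℝ} (hh : 0 < h) (q : ℝ × ℝ) : 0 < distPt xi yi h q :=
  sqrt_pos.2 (by positivity)

/-- if `((x-x_i)² + (y-y_i)²)/d_i² < 1/(m+2)` for every `i`, then the
determinant `a·c - b²` of the Hessian of `f` at `p` is positive. -/
theorem hessian_determinant_positive
    (n : ℕ) (X Y : Fin (n + 1) → ℝ) (h m : ℝ) (hh : 0 < h) (hm : 3 < m ∧ m < 4)
    (p : ℝ × ℝ)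
    (hsmall : ∀ i, ((p.1 - X i) ^ 2 + (p.2 - Y i) ^ 2) / distPt (X i) (Y i) h p ^ 2
      < 1 / (m + 2)) :
    0 < hessA X Y m h p * hessC X Y m h p - hessB X Y m h p ^ 2 := by
  have hm2 : 0 < m + 2 := by linarith [hm.1]
  have hd (i : Fin (n + 1)) := distPt_pos (xi := X i) (yi := Y i) hh p
  have hsmall_mul (i : Fin (n + 1)) : (m + 2) * ((p.1 - X i) ^ 2 + (p.2 - Y i) ^ 2) <
      distPt (X i) (Y i) h p ^ 2 := by
    have := hsmall i
    rw [div_lt_div_iff₀ (pow_pos (hd i) 2) hm2] at this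
    linarith
  have hcauchy := sq_sum_lt_sum_mul_sum_of_sq_lt_mul univ_nonempty
    (fun i _ => (hessDiagTerm_pos (hd i) (by nlinarith [hsmall_mul i, sq_nonneg (p.2 - Y i)])).le)
    (fun i _ => (hessDiagTerm_pos (hd i) (by nlinarith [hsmall_mul i, sq_nonneg (p.1 - X i)])).le)
    (fun i _ => hessOffDiagTerm_sq_lt (hd i) (hsmall_mul i))
  rw [hessA_eq_sum, hessB_eq_sum, hessC_eq_sum]
  have hm0 : 0 < m ^ 2 := pow_pos (by linarith [hm.1]) 2
  nlinarith [mul_pos hm0 (sub_pos.2 hcauchy)]
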